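/- Let p ≥ 1 and let (A_n)_{n∈ℕ} be a sequence of p×p complex matrices such that the operator norms ‖A_n‖ (with respect to the Euclidean norm on ℂ^p) tend to infinity and such that the sequence (|det(A_n)|)_{n∈ℕ} is bounded above. Then there exist a strictly increasing function φ : ℕ → ℕ, a sequence of vectors v_n ∈ ℂ^p with ‖v_n‖ = 1, and a vector v ∈ ℂ^p with ‖v‖ = 1, such that v_n → v and ‖A_{φ(n)} · v_n‖ → 0 as n → ∞. -/

import Mathlib

/-!
The absolute value of `det A` is the product of the singular values `σ₀ ≥ ⋯ ≥ σ_{p-1}` of `A`,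
and `‖A‖ ≤ σ₀`. Hence `σ_{p-1} ^ (p - 1) * ‖A‖ ≤ |det A|`, so when `‖A‖ → ∞` with `|det A|`
bounded, the smallest singular value tends to `0`; it is attained as `‖A v‖` at a unit
eigenvector `v` of `Aᴴ A`. Compactness of the unit sphere then yields a convergent subsequence.
-/

open Module Filter Topology

namespace LinearMap

variable {𝕜 E F : Type*} [RCLike 𝕜]
  [NormedAddCommGroup E] [InnerProductSpace 𝕜 E] [FiniteDimensional 𝕜 E]
  [NormedAddCommGroup F] [InnerProductSpace 𝕜 F] [FiniteDimensional 𝕜 F]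
  (T : E →ₗ[𝕜] F)

theorem norm_apply_sq_eq_re_inner_adjoint_comp_self (x : E) :
    ‖T x‖ ^ 2 = RCLike.re (inner 𝕜 x ((adjoint T ∘ₗ T) x)) := by
  rw [comp_apply, adjoint_inner_right, ← norm_sq_eq_re_inner]

theorem norm_apply_le_singularValues_zero_mul (x : E) : ‖T x‖ ≤ T.singularValues 0 * ‖x‖ := by
  set hS := T.isSymmetric_adjoint_comp_self
  set b := hS.eigenvectorBasis rfl
  set μ := hS.eigenvalues rfl
  rcases (finrank 𝕜 E).eq_zero_or_pos with hd | hd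
  · have : Subsingleton E := finrank_zero_iff.mp hd
    simp [Subsingleton.elim x 0]
  have h_expand :
      inner 𝕜 x ((adjoint T ∘ₗ T) x) = ∑ i, (μ i : 𝕜) * (‖inner 𝕜 (b i) x‖ ^ 2 : ℝ) := by
    rw [← b.sum_inner_mul_inner]
    refine Finset.sum_congr rfl fun i _ => ?_
    rw [← hS (b i), hS.apply_eigenvectorBasis, inner_smul_left, RCLike.conj_ofReal,
      ← inner_conj_symm, RCLike.ofReal_pow, ← RCLike.mul_conj]
    ring
  have hsq : ‖T x‖ ^ 2 ≤ (T.singularValues 0 * ‖x‖) ^ 2 := by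
    rw [norm_apply_sq_eq_re_inner_adjoint_comp_self, h_expand, mul_pow,
      T.sq_singularValues_of_lt rfl hd, ← b.sum_sq_norm_inner_right, Finset.mul_sum]
    simp only [map_sum, ← RCLike.ofReal_mul, RCLike.ofReal_re]
    gcongr with i
    exact hS.eigenvalues_antitone rfl (Nat.zero_le i.val)
  exact (pow_le_pow_iff_left₀ (norm_nonneg _)
    (mul_nonneg (T.singularValues_nonneg 0) (norm_nonneg x)) two_ne_zero).mp hsq

theorem exists_norm_eq_one_and_norm_apply_eq_singularValues {i : ℕ} (hi : i < finrank 𝕜 E) :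
    ∃ x : E, ‖x‖ = 1 ∧ ‖T x‖ = T.singularValues i := by
  set hS := T.isSymmetric_adjoint_comp_self
  set x := hS.eigenvectorBasis rfl ⟨i, hi⟩
  have hx : ‖x‖ = 1 := (hS.eigenvectorBasis rfl).orthonormal.1 _
  refine ⟨x, hx, ?_⟩
  have hsq : ‖T x‖ ^ 2 = T.singularValues i ^ 2 := by
    rw [norm_apply_sq_eq_re_inner_adjoint_comp_self, hS.apply_eigenvectorBasis, inner_smul_right,
      inner_self_eq_norm_sq_to_K, hx, T.sq_singularValues_of_lt rfl hi]
    simp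
  exact (pow_left_inj₀ (norm_nonneg _) (T.singularValues_nonneg i) two_ne_zero).mp hsq

theorem singularValues_zero_mul_pow_le_normDet (hd : 0 < finrank 𝕜 E) :
    T.singularValues 0 * T.singularValues (finrank 𝕜 E - 1) ^ (finrank 𝕜 E - 1) ≤
      T.normDet := by
  obtain ⟨k, hk⟩ := Nat.exists_eq_add_of_lt hd
  rw [normDet_eq_prod_singularValues, hk, zero_add, Nat.add_sub_cancel, Finset.prod_range_succ',
    mul_comm]
  refine mul_le_mul_of_nonneg_right ?_ (T.singularValues_nonneg 0)
  calc T.singularValues k ^ k = ∏ _i ∈ Finset.range k, T.singularValues k := by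
        rw [Finset.prod_const, Finset.card_range]
    _ ≤ ∏ i ∈ Finset.range k, T.singularValues (i + 1) :=
        Finset.prod_le_prod (fun _ _ => T.singularValues_nonneg k)
          (fun i hi => T.singularValues_antitone (Finset.mem_range.mp hi))

end LinearMap

theorem ContinuousLinearMap.exists_norm_eq_one_and_norm_apply_pow_mul_opNorm_le_norm_det
    {𝕜 E : Type*} [RCLike 𝕜] [NormedAddCommGroup E] [InnerProductSpace 𝕜 E]
    [FiniteDimensional 𝕜 E] (T : E →L[𝕜] E) (hd : 0 < finrank 𝕜 E) :
    ∃ x : E, ‖x‖ = 1 ∧ ‖T x‖ ^ (finrank 𝕜 E - 1) * ‖T‖ ≤ ‖T.det‖ := by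
  set S : E →ₗ[𝕜] E := (T : E →ₗ[𝕜] E)
  obtain ⟨x, hx, hSx⟩ :=
    S.exists_norm_eq_one_and_norm_apply_eq_singularValues (Nat.sub_lt hd one_pos)
  have hT : ‖T‖ ≤ S.singularValues 0 :=
    T.opNorm_le_bound (S.singularValues_nonneg 0) S.norm_apply_le_singularValues_zero_mul
  refine ⟨x, hx, ?_⟩
  calc ‖T x‖ ^ (finrank 𝕜 E - 1) * ‖T‖
      ≤ S.singularValues (finrank 𝕜 E - 1) ^ (finrank 𝕜 E - 1) * S.singularValues 0 := by
        gcongr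
        · exact pow_nonneg (S.singularValues_nonneg _) _
        · exact hSx.le
    _ ≤ S.normDet := by
        rw [mul_comm]
        exact S.singularValues_zero_mul_pow_le_normDet hd
    _ = ‖T.det‖ := S.normDet_eq_norm_det

theorem Matrix.det_toEuclideanCLM {𝕜 n : Type*} [RCLike 𝕜] [Fintype n] [DecidableEq n]
    (A : Matrix n n 𝕜) : (Matrix.toEuclideanCLM (𝕜 := 𝕜) A).det = A.det := by
  rw [ContinuousLinearMap.det, Matrix.coe_toEuclideanCLM_eq_toEuclideanLin,
    Matrix.toEuclideanLin_eq_toLin_orthonormal, LinearMap.det_toLin]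

theorem tendsto_nhds_zero_of_pow_mul_le {a b : ℕ → ℝ} {k : ℕ} {C : ℝ} (ha : ∀ n, 0 ≤ a n)
    (hb : Tendsto b atTop atTop) (hab : ∀ n, a n ^ k * b n ≤ C) : Tendsto a atTop (𝓝 0) := by
  -- For `k = 0` this is the contradiction `1 → 0`, so the case needs no separate treatment.
  have hpow : Tendsto (fun n => a n ^ k) atTop (𝓝 0) := by
    refine squeeze_zero' (Eventually.of_forall fun n => pow_nonneg (ha n) k) ?_
      ((tendsto_const_nhds (x := C)).div_atTop hb)
    filter_upwards [hb.eventually_gt_atTop 0] with n hn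
    exact (le_div_iff₀ hn).mpr (hab n)
  refine tendsto_order.2 ⟨fun c hc => Eventually.of_forall fun n => hc.trans_le (ha n),
    fun ε hε => ?_⟩
  filter_upwards [(tendsto_order.1 hpow).2 (ε ^ k) (pow_pos hε k)] with n hn
  exact lt_of_pow_lt_pow_left₀ k hε.le hn

/-- If the Euclidean operator norms of a sequence of `p × p` complex matrices tend to infinity
while their determinants stay bounded in absolute value, then along a subsequence there are
Euclidean-unit vectors `v n`, converging to a unit vector `w`, that are almost annihilated:
`‖A (φ n) (v n)‖ → 0`. -/
theorem exists_unit_vectors_almost_annihilated (p : ℕ) (hp : 1 ≤ p)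
    (A : ℕ → Matrix (Fin p) (Fin p) ℂ)
    (hnorm : Tendsto (fun n => ‖Matrix.toEuclideanCLM (𝕜 := ℂ) (A n)‖) atTop atTop)
    (hdet : ∃ C : ℝ, ∀ n, ‖(A n).det‖ ≤ C) :
    ∃ (φ : ℕ → ℕ) (v : ℕ → EuclideanSpace ℂ (Fin p)) (w : EuclideanSpace ℂ (Fin p)),
      StrictMono φ ∧ (∀ n, ‖v n‖ = 1) ∧ ‖w‖ = 1 ∧
      Tendsto v atTop (nhds w) ∧
      Tendsto (fun n => ‖Matrix.toEuclideanCLM (𝕜 := ℂ) (A (φ n)) (v n)‖) atTop (nhds 0) := by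
  obtain ⟨C, hC⟩ := hdet
  choose u hu_norm hu_det using fun n =>
    ContinuousLinearMap.exists_norm_eq_one_and_norm_apply_pow_mul_opNorm_le_norm_det
      (Matrix.toEuclideanCLM (𝕜 := ℂ) (A n)) (by rwa [finrank_euclideanSpace_fin])
  have hu_small : Tendsto (fun n => ‖Matrix.toEuclideanCLM (𝕜 := ℂ) (A n) (u n)‖) atTop (𝓝 0) :=
    tendsto_nhds_zero_of_pow_mul_le (fun n => norm_nonneg _) hnorm fun n =>
      (hu_det n).trans (by rw [Matrix.det_toEuclideanCLM]; exact hC n)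
  obtain ⟨w, hw, φ, hφ, hconv⟩ :=
    (isCompact_sphere (0 : EuclideanSpace ℂ (Fin p)) 1).tendsto_subseq (x := u)
      fun n => by simp [hu_norm n]
  exact ⟨φ, u ∘ φ, w, hφ, fun n => hu_norm (φ n), by simpa using hw, hconv,
    hu_small.comp hφ.tendsto_atTop⟩
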